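/- arXiv:1104.2111 — 4 statements merged into one kernel-verified Lean document; each statement's English description precedes it below -/
import Mathlib

section
/- Let f : Φ → Ψ be a natural transformation between 2-functors Φ, Ψ : D → Cat. If precomposition with f reflects invertible identity modifications (i.e., for any modification β which is an isomorphism, βf an identity implies β an identity), then f is pointwise surjective on objects. -/
open CategoryTheory

universe u

variable {D : Type u} [SmallCategory D]

/-- Naturality of a transformation between `Cat`-valued functors, expressed as an
equality of functors. -/
theorem natEq {Ψ Υ : D ⥤ Cat.{u, u}} (g : Ψ ⟶ Υ) {d d' : D} (u : d ⟶ d') :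
    ((Ψ.map u).toFunctor : ↥(Ψ.obj d) ⥤ ↥(Ψ.obj d')) ⋙ ((g.app d').toFunctor : ↥(Ψ.obj d') ⥤ ↥(Υ.obj d')) =
      ((g.app d).toFunctor : ↥(Ψ.obj d) ⥤ ↥(Υ.obj d)) ⋙ ((Υ.map u).toFunctor : ↥(Υ.obj d) ⥤ ↥(Υ.obj d')) :=
  congrArg Cat.Hom.toFunctor (g.naturality u)

/-- A modification between (strictly) 2-natural transformations `g, h : Ψ ⟶ Υ` of
`Cat`-valued functors. -/
structure Modification {Ψ Υ : D ⥤ Cat.{u, u}} (g h : Ψ ⟶ Υ) where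
  app : ∀ d : D,
    ((g.app d).toFunctor : ↥(Ψ.obj d) ⥤ ↥(Υ.obj d)) ⟶ ((h.app d).toFunctor : ↥(Ψ.obj d) ⥤ ↥(Υ.obj d))
  naturality : ∀ {d d' : D} (u : d ⟶ d'),
    CategoryTheory.Functor.whiskerLeft ((Ψ.map u).toFunctor : ↥(Ψ.obj d) ⥤ ↥(Ψ.obj d')) (app d') ≫
        eqToHom (natEq h u) =
      eqToHom (natEq g u) ≫
        CategoryTheory.Functor.whiskerRight (app d) ((Υ.map u).toFunctor : ↥(Υ.obj d) ⥤ ↥(Υ.obj d'))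

/-- A morphism "is an identity" if its source and target are equal and it is the
corresponding `eqToHom`. -/
def IsIdentity {C : Type*} [Category C] {X Y : C} (φ : X ⟶ Y) : Prop :=
  ∃ e : X = Y, φ = eqToHom e

/-! Send each `Ψ.obj d` to the codiscrete category on `O.obj d`, for a functor `O : D ⥤ Type u`.
Transformations into such a 2-functor are just natural maps on objects, and between any two of
them there is a unique modification, invertible, whose component at `y` is an identity exactly
when the two maps agree at `y`. So the hypothesis makes `f` an epimorphism on objects in
`D ⥤ Type u`, hence pointwise surjective. -/

lemma isIdentity_iff_eq {C : Type*} [Category C] [Quiver.IsThin C] {X Y : C} (φ : X ⟶ Y) :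
    IsIdentity φ ↔ X = Y :=
  ⟨fun ⟨e, _⟩ => e, fun e => ⟨e, Subsingleton.elim _ _⟩⟩

/-- `Codiscrete A` has morphisms in `Type`; lifting them lands in `Cat.{u, u}`. -/
abbrev CodiscreteCat (A : Type u) : Cat.{u, u} := Cat.of (ULiftHom.{u} (Codiscrete A))

instance (A : Type u) : Quiver.IsThin (CodiscreteCat A) := fun _ _ =>
  inferInstanceAs (Subsingleton (ULift Unit))

lemma CodiscreteCat.functor_ext {C : Type*} [Category C] {A : Type u} {F G : C ⥤ CodiscreteCat A}
    (h : ∀ X, F.obj X = G.obj X) : F = G :=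
  CategoryTheory.Functor.ext h (fun _ _ _ => Subsingleton.elim _ _)

def codiscreteCat : Type u ⥤ Cat.{u, u} where
  obj := CodiscreteCat
  map φ := (ULiftHom.down ⋙ Codiscrete.functorOfFun φ ⋙ ULiftHom.up).toCatHom
  map_id _ := Cat.ext (CodiscreteCat.functor_ext fun _ => rfl)
  map_comp _ _ := Cat.ext (CodiscreteCat.functor_ext fun _ => rfl)

section

variable {Ψ : D ⥤ Cat.{u, u}} {O : D ⥤ Type u}

def liftToCodiscreteCat (g : Ψ ⋙ Cat.objects ⟶ O) : Ψ ⟶ O ⋙ codiscreteCat where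
  app d := (Codiscrete.functor (g.app d) ⋙ ULiftHom.up).toCatHom
  naturality _ _ u := Cat.ext <| CodiscreteCat.functor_ext fun x =>
    congrArg Codiscrete.mk (NatTrans.naturality_apply g u x)

def Modification.codiscrete (g h : Ψ ⟶ O ⋙ codiscreteCat) : Modification g h where
  app _ := { app := fun _ => ⟨()⟩ }
  naturality _ := by ext; rfl

instance (g h : Ψ ⟶ O ⋙ codiscreteCat) (d : D) : IsIso ((Modification.codiscrete g h).app d) := by
  have (x : Ψ.obj d) : IsIso (((Modification.codiscrete g h).app d).app x) := ⟨⟨⟨()⟩, rfl, rfl⟩⟩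
  exact NatIso.isIso_of_isIso_app _

lemma Modification.isIdentity_codiscrete_app_iff (g h : Ψ ⋙ Cat.objects ⟶ O) {d : D}
    (y : Ψ.obj d) :
    IsIdentity (((Modification.codiscrete (liftToCodiscreteCat g) (liftToCodiscreteCat h)).app
      d).app y) ↔ g.app d y = h.app d y :=
  (isIdentity_iff_eq (C := CodiscreteCat (O.obj d)) _).trans
    ⟨congrArg Codiscrete.as, congrArg Codiscrete.mk⟩

end

/-- If precomposition with `f : Φ ⟶ Ψ` reflects identities among
*invertible* modifications (for every modification `β` all of whose components are
isomorphisms, `β f` an identity implies `β` an identity), then `f` is pointwise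
surjective on objects. -/
theorem reflects_iso_identity_modifications_implies_pointwise_surjective
    (Φ Ψ : D ⥤ Cat.{u, u}) (f : Φ ⟶ Ψ)
    (hrefl : ∀ (Υ : D ⥤ Cat.{u, u}) (g h : Ψ ⟶ Υ) (β : Modification g h),
      (∀ d : D, IsIso (β.app d)) →
      (∀ (d : D) (x : ↥(Φ.obj d)), IsIdentity ((β.app d).app ((f.app d).toFunctor.obj x))) →
      (∀ (d : D) (y : ↥(Ψ.obj d)), IsIdentity ((β.app d).app y))) :
    ∀ d : D, Function.Surjective ((f.app d).toFunctor : ↥(Φ.obj d) ⥤ ↥(Ψ.obj d)).obj := by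
  intro d
  suffices Epi (Functor.whiskerRight f Cat.objects) from
    (epi_iff_surjective _).1 ((NatTrans.epi_iff_epi_app _).1 this d)
  refine ⟨fun {O} g h hgh => ?_⟩
  have hβ := hrefl _ _ _ (Modification.codiscrete (liftToCodiscreteCat g) (liftToCodiscreteCat h))
    inferInstance fun d x => (Modification.isIdentity_codiscrete_app_iff g h _).2
      (ConcreteCategory.congr_hom (NatTrans.congr_app hgh d) x)
  ext d y
  exact (Modification.isIdentity_codiscrete_app_iff g h y).1 (hβ d y)
end

section
/- The full subcategory F of the arrow category Cat² determined by the functors that are injective on objects and fully faithful (full embeddings) is a reflective subcategory of Cat², and is therefore complete and cocomplete. -/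
/-!
The reflection of a functor `F : A ⥤ B` is its image factorization `A ⥤ F[A] ⥤ B` through the
full subcategory of `B` on the objects `F.obj a`: the first factor is surjective on objects, the
second is a full embedding. A commutative square from `F` to a full embedding `W : C ⥤ D` has a
diagonal `F[A] ⥤ C`, forced on objects by injectivity of `W.obj` and on morphisms by full
faithfulness, and it is unique because `W` is a monomorphism in `Cat`. Since `Cat` is complete and
cocomplete, so is `Cat²`, and a reflective subcategory inherits both.
-/

open CategoryTheory

universe u

/-- The property of an object of the arrow category of `Cat` of being a full embedding:
a fully faithful functor which is injective on objects. -/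
def IsFullEmbedding (X : Arrow Cat.{u, u}) : Prop :=
  (X.hom.toFunctor : ↥X.left ⥤ ↥X.right).Full ∧ (X.hom.toFunctor : ↥X.left ⥤ ↥X.right).Faithful ∧
    Function.Injective (X.hom.toFunctor : ↥X.left ⥤ ↥X.right).obj

/-- The category `F`: the full subcategory of the arrow category `Cat²` on the full
embeddings. -/
abbrev FCat : Type (u + 1) := ObjectProperty.FullSubcategory IsFullEmbedding.{u}

namespace CategoryTheory.Functor

variable {A C D I : Type*} [Category A] [Category C] [Category D] [Category I]

theorem eq_of_comp_eq_of_faithful_of_injective (W : C ⥤ D) [W.Faithful]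
    (hW : Function.Injective W.obj) {L L' : I ⥤ C} (h : L ⋙ W = L' ⋙ W) : L = L' :=
  Functor.ext (fun i => hW (congr_obj h i)) fun _ _ f =>
    W.map_injective (by simpa [eqToHom_map] using congr_hom h f)

noncomputable def liftOfFullyFaithful (W : C ⥤ D) [W.Full] [W.Faithful] (H : I ⥤ D)
    (hH : ∀ i, H.obj i ∈ Set.range W.obj) : I ⥤ C :=
  Faithful.div H W (fun i => (hH i).choose) (fun i => (hH i).choose_spec)
    (fun f => W.preimage (eqToHom (hH _).choose_spec ≫ H.map f ≫ eqToHom (hH _).choose_spec.symm))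
    (by simp)

theorem liftOfFullyFaithful_comp (W : C ⥤ D) [W.Full] [W.Faithful] (H : I ⥤ D)
    (hH : ∀ i, H.obj i ∈ Set.range W.obj) : liftOfFullyFaithful W H hH ⋙ W = H :=
  Functor.hext (fun i => (hH i).choose_spec) fun _ _ f => by
    simp [liftOfFullyFaithful, Faithful.div]

theorem obj_mem_range_of_comp_eq {E : A ⥤ I} (hE : Function.Surjective E.obj) {W : C ⥤ D}
    {top : A ⥤ C} {bottom : I ⥤ D} (h : E ⋙ bottom = top ⋙ W) (i : I) :
    bottom.obj i ∈ Set.range W.obj := by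
  obtain ⟨a, rfl⟩ := hE i
  exact ⟨top.obj a, (congr_obj h a).symm⟩

theorem comp_liftOfFullyFaithful {E : A ⥤ I} (hE : Function.Surjective E.obj) {W : C ⥤ D}
    [W.Full] [W.Faithful] (hW : Function.Injective W.obj) {top : A ⥤ C} {bottom : I ⥤ D}
    (h : E ⋙ bottom = top ⋙ W) :
    E ⋙ liftOfFullyFaithful W bottom (obj_mem_range_of_comp_eq hE h) = top :=
  eq_of_comp_eq_of_faithful_of_injective W hW <| by
    rw [Functor.assoc, liftOfFullyFaithful_comp, h]

end CategoryTheory.Functor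

namespace IsFullEmbedding

variable (X : Arrow Cat.{u, u})

abbrev imageProperty : ObjectProperty X.right := ObjectProperty.ofObj X.hom.toFunctor.obj

abbrev corestrict : X.left ⥤ (imageProperty X).FullSubcategory :=
  (imageProperty X).lift X.hom.toFunctor (ObjectProperty.ofObj_apply _)

theorem corestrict_obj_surjective : Function.Surjective (corestrict X).obj := by
  rintro ⟨_, ⟨a⟩⟩
  exact ⟨a, rfl⟩

def image : FCat.{u} :=
  ⟨Arrow.mk (imageProperty X).ι.toCatHom, inferInstanceAs (imageProperty X).ι.Full,
    inferInstanceAs (imageProperty X).ι.Faithful, fun _ _ h => ObjectProperty.FullSubcategory.ext h⟩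

def toImage : X ⟶ (image X).obj :=
  Arrow.homMk (corestrict X).toCatHom (𝟙 _) rfl

theorem toImage_comp_injective (W : FCat.{u}) :
    Function.Injective fun m : image X ⟶ W => toImage X ≫ m.hom := by
  obtain ⟨_, _, hinj⟩ := W.property
  intro m m' h
  have hright : m.hom.right = m'.hom.right :=
    (Category.id_comp _).symm.trans ((congrArg Arrow.Hom.right h).trans (Category.id_comp _))
  ext1
  refine Arrow.hom_ext _ _ (Cat.Hom.ext ?_) hright
  refine Functor.eq_of_comp_eq_of_faithful_of_injective _ hinj ?_
  exact (congrArg Cat.Hom.toFunctor (Arrow.w m.hom)).trans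
    (hright ▸ (congrArg Cat.Hom.toFunctor (Arrow.w m'.hom)).symm)

theorem toImage_comp_surjective (W : FCat.{u}) :
    Function.Surjective fun m : image X ⟶ W => toImage X ≫ m.hom := by
  obtain ⟨_, _, hinj⟩ := W.property
  intro g
  have hsq : corestrict X ⋙ (imageProperty X).ι ⋙ g.right.toFunctor =
      g.left.toFunctor ⋙ W.obj.hom.toFunctor :=
    (congrArg Cat.Hom.toFunctor (Arrow.w g)).symm
  let diagonal := Functor.liftOfFullyFaithful _ _
    (Functor.obj_mem_range_of_comp_eq (corestrict_obj_surjective X) hsq)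
  refine ⟨ObjectProperty.homMk (Arrow.homMk ⟨diagonal⟩ g.right
    (Cat.Hom.ext (Functor.liftOfFullyFaithful_comp _ _ _))), ?_⟩
  refine Arrow.hom_ext _ _ ?_ (Category.id_comp _)
  exact Cat.Hom.ext (Functor.comp_liftOfFullyFaithful (corestrict_obj_surjective X) hinj hsq)

end IsFullEmbedding

noncomputable instance FCat.reflective : Reflective (ObjectProperty.ι IsFullEmbedding.{u}) where
  L := Adjunction.leftAdjointOfEquiv
    (fun X W => Equiv.ofBijective _
      ⟨IsFullEmbedding.toImage_comp_injective X W, IsFullEmbedding.toImage_comp_surjective X W⟩)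
    (fun X _ _ _ _ => (Category.assoc (IsFullEmbedding.toImage X) _ _).symm)
  adj := Adjunction.adjunctionOfEquivLeft _ _

/-- The full subcategory `F` of `Cat²` determined by the full embeddings
(functors injective on objects and fully faithful) is reflective in `Cat²`, and is
complete and cocomplete. -/
theorem FCat_reflective_complete_cocomplete :
    Nonempty (Reflective (ObjectProperty.ι IsFullEmbedding.{u})) ∧
      Limits.HasLimits FCat.{u} ∧ Limits.HasColimits FCat.{u} :=
  ⟨⟨inferInstance⟩, hasLimits_of_reflective (ObjectProperty.ι _),
    hasColimits_of_reflective (ObjectProperty.ι _)⟩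
end

section
/- Let T be a lax-idempotent 2-monad on a 2-category K. Then for any two T-algebras (A,a), (B,b), any two lax T-morphisms (f, f̄), (g, ḡ) : (A,a) → (B,b), and any 2-cell α : f → g in K, the 2-cell α is automatically a T-transformation, i.e., satisfies the compatibility condition ḡ ∘ (b · Tα) = (α · a) ∘ f̄. -/
open CategoryTheory CategoryTheory.Bicategory

universe w v u

variable (K : Type u) [Bicategory.{w, v} K] [Bicategory.Strict K]

/-- A (strict) 2-monad on a strict 2-category `K`: a 2-functor `T` together with
strictly 2-natural transformations `η : 1 ⟶ T` and `μ : T² ⟶ T` satisfying the monad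
laws. -/
structure TwoMonad where
  obj : K → K
  map : ∀ {A B : K}, (A ⟶ B) → (obj A ⟶ obj B)
  map₂ : ∀ {A B : K} {f g : A ⟶ B}, (f ⟶ g) → (map f ⟶ map g)
  map_id : ∀ A : K, map (𝟙 A) = 𝟙 (obj A)
  map_comp : ∀ {A B C : K} (f : A ⟶ B) (g : B ⟶ C), map (f ≫ g) = map f ≫ map g
  map₂_id : ∀ {A B : K} (f : A ⟶ B), map₂ (𝟙 f) = 𝟙 (map f)
  map₂_comp : ∀ {A B : K} {f g h : A ⟶ B} (α : f ⟶ g) (β : g ⟶ h),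
    map₂ (α ≫ β) = map₂ α ≫ map₂ β
  η : ∀ A : K, A ⟶ obj A
  μ : ∀ A : K, obj (obj A) ⟶ obj A
  η_nat : ∀ {A B : K} (f : A ⟶ B), η A ≫ map f = f ≫ η B
  μ_nat : ∀ {A B : K} (f : A ⟶ B), map (map f) ≫ μ B = μ A ≫ map f
  η_nat₂ : ∀ {A B : K} {f g : A ⟶ B} (α : f ⟶ g),
    (η A ◁ map₂ α) ≫ eqToHom (η_nat g) = eqToHom (η_nat f) ≫ (α ▷ η B)
  μ_nat₂ : ∀ {A B : K} {f g : A ⟶ B} (α : f ⟶ g),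
    (map₂ (map₂ α) ▷ μ B) ≫ eqToHom (μ_nat g) = eqToHom (μ_nat f) ≫ (μ A ◁ map₂ α)
  left_unit : ∀ A : K, η (obj A) ≫ μ A = 𝟙 (obj A)
  right_unit : ∀ A : K, map (η A) ≫ μ A = 𝟙 (obj A)
  μ_assoc : ∀ A : K, map (μ A) ≫ μ A = μ (obj A) ≫ μ A

variable {K}

/-- A strict algebra for a 2-monad. -/
structure TwoMonad.Alg (T : TwoMonad K) where
  A : K
  a : T.obj A ⟶ A
  unit : T.η A ≫ a = 𝟙 A
  mult : T.map a ≫ a = T.μ A ≫ a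

namespace TwoMonad

variable {T : TwoMonad K} (X Y : T.Alg) (f : X.A ⟶ Y.A)

theorem lax_unit_eq : T.η X.A ≫ T.map f ≫ Y.a = T.η X.A ≫ X.a ≫ f := by
  rw [← Category.assoc, T.η_nat, Category.assoc, Y.unit, Category.comp_id,
    ← Category.assoc, X.unit, Category.id_comp]

theorem lax_mult_eq₁ :
    T.map (T.map f) ≫ T.map Y.a ≫ Y.a = T.μ X.A ≫ T.map f ≫ Y.a := by
  rw [Y.mult, ← Category.assoc, T.μ_nat, Category.assoc]

theorem lax_mult_eq₂ :
    T.μ X.A ≫ X.a ≫ f = T.map X.a ≫ X.a ≫ f := by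
  rw [← Category.assoc, ← X.mult, Category.assoc]

theorem lax_map_eq₁ :
    T.map (T.map f) ≫ T.map Y.a = T.map (T.map f ≫ Y.a) := (T.map_comp _ _).symm

theorem lax_map_eq₂ :
    T.map (X.a ≫ f) = T.map X.a ≫ T.map f := T.map_comp _ _

theorem lax_assoc_eq :
    T.map (T.map f) ≫ T.map Y.a ≫ Y.a = (T.map (T.map f) ≫ T.map Y.a) ≫ Y.a :=
  (Category.assoc _ _ _).symm

/-- A lax `T`-morphism structure on a 1-cell `f` between the underlying objects of two
`T`-algebras: a comparison 2-cell `f̄ : b ∘ Tf ⟶ f ∘ a` satisfying the unit and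
multiplication coherence axioms. -/
structure LaxCell where
  cell : T.map f ≫ Y.a ⟶ X.a ≫ f
  unit_coh : T.η X.A ◁ cell = eqToHom (lax_unit_eq X Y f)
  mult_coh :
    eqToHom (lax_mult_eq₁ X Y f) ≫ (T.μ X.A ◁ cell) ≫ eqToHom (lax_mult_eq₂ X Y f) =
      eqToHom (lax_assoc_eq X Y f) ≫
        ((eqToHom (lax_map_eq₁ X Y f) ≫ T.map₂ cell ≫ eqToHom (lax_map_eq₂ X Y f)) ▷ Y.a) ≫
        eqToHom (Category.assoc _ _ _) ≫ (T.map X.a ◁ cell)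

/-- `T` is lax-idempotent: for every `T`-algebra `(A, a)` there is an adjunction
`a ⊣ η_A` with identity counit. -/
def LaxIdempotent (T : TwoMonad K) : Prop :=
  ∀ X : T.Alg, ∃ adj : Bicategory.Adjunction X.a (T.η X.A),
    adj.counit = eqToHom X.unit

end TwoMonad

section AuxLemmas

variable {a b c d : K}

theorem wR_congr {f g : a ⟶ b} (η : f ⟶ g) {h h' : b ⟶ c} (e : h = h') :
    η ▷ h = eqToHom (by rw [e]) ≫ (η ▷ h') ≫ eqToHom (by rw [e]) := by
  subst e; simp

/-- Strict form of `whiskerRight_comp`. -/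
theorem sR {f f' : a ⟶ b} (η : f ⟶ f') (g : b ⟶ c) (h : c ⟶ d) :
    η ▷ (g ≫ h) = eqToHom (Category.assoc f g h).symm ≫ (η ▷ g) ▷ h ≫
      eqToHom (Category.assoc f' g h) := by
  simp [Bicategory.whiskerRight_comp, Bicategory.Strict.associator_eqToIso]

/-- Strict form of `comp_whiskerLeft`. -/
theorem sL (f : a ⟶ b) (g : b ⟶ c) {h h' : c ⟶ d} (η : h ⟶ h') :
    (f ≫ g) ◁ η = eqToHom (Category.assoc f g h) ≫ (f ◁ (g ◁ η)) ≫
      eqToHom (Category.assoc f g h').symm := by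
  simp [Bicategory.comp_whiskerLeft, Bicategory.Strict.associator_eqToIso]

/-- Strict form of `whisker_assoc`. -/
theorem sA (f : a ⟶ b) {g g' : b ⟶ c} (η : g ⟶ g') (h : c ⟶ d) :
    f ◁ (η ▷ h) = eqToHom (Category.assoc f g h).symm ≫ ((f ◁ η) ▷ h) ≫
      eqToHom (Category.assoc f g' h) := by
  simp [Bicategory.whisker_assoc, Bicategory.Strict.associator_eqToIso]

/-- Strict form of `whiskerRight_id`. -/
theorem sRid {f g : a ⟶ b} (η : f ⟶ g) :
    η ▷ 𝟙 b = eqToHom (Category.comp_id f) ≫ η ≫ eqToHom (Category.comp_id g).symm := by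
  simp [Bicategory.Strict.rightUnitor_eqToIso]

/-- Strict form of `id_whiskerLeft`. -/
theorem sLid {f g : a ⟶ b} (η : f ⟶ g) :
    𝟙 a ◁ η = eqToHom (Category.id_comp f) ≫ η ≫ eqToHom (Category.id_comp g).symm := by
  simp [Bicategory.Strict.leftUnitor_eqToIso]

/-- The unit of an adjunction with identity counit, whiskered with the left adjoint,
is an identity (up to `eqToHom`). -/
theorem unit_wR_eq {A B : K} {p : B ⟶ A} {e : A ⟶ B} (h : e ≫ p = 𝟙 A)
    (adj : Bicategory.Adjunction p e) (hε : adj.counit = eqToHom h) :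
    adj.unit ▷ p = eqToHom (by rw [Category.assoc, h]; simp) := by
  have := adj.left_triangle
  simp only [leftZigzag, bicategoricalComp, BicategoricalCoherence.assoc_iso,
    BicategoricalCoherence.refl_iso, BicategoricalCoherence.whiskerLeft_iso,
    whiskerLeftIso_hom, Bicategory.whiskerLeft_id, BicategoricalCoherence.whiskerRight_iso, whiskerRightIso_hom, Bicategory.id_whiskerRight,
    hε, Iso.trans_hom, Iso.refl_hom, eqToIso.hom,
    Bicategory.Strict.associator_eqToIso, Bicategory.Strict.leftUnitor_eqToIso,
    Bicategory.Strict.rightUnitor_eqToIso, eqToIso.inv, Bicategory.whiskerLeft_eqToHom,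
    Category.comp_id, Category.id_comp, eqToHom_trans] at this
  rw [comp_eqToHom_iff] at this
  rw [this]; simp

end AuxLemmas

theorem comp_eq (T : TwoMonad K) (X Y : T.Alg) (f : X.A ⟶ Y.A) :
    (X.a ≫ T.η X.A) ≫ T.map f ≫ Y.a = X.a ≫ f := by
  rw [Category.assoc, ← Category.assoc (T.η X.A), T.η_nat, Category.assoc, Y.unit,
    Category.comp_id]

theorem cell_eq_canonical {T : TwoMonad K} {X Y : T.Alg} {f : X.A ⟶ Y.A}
    (c : TwoMonad.LaxCell X Y f) (adj : Bicategory.Adjunction X.a (T.η X.A))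
    (hε : adj.counit = eqToHom X.unit) :
    c.cell = eqToHom (Category.id_comp (T.map f ≫ Y.a)).symm ≫
      (adj.unit ▷ (T.map f ≫ Y.a)) ≫ eqToHom (comp_eq T X Y f) := by
  have L1 := unit_wR_eq X.unit adj hε
  have we := whisker_exchange adj.unit c.cell
  rw [sLid, sR, sL, L1, c.unit_coh] at we
  simp only [eqToHom_whiskerRight, Bicategory.whiskerLeft_eqToHom, eqToHom_trans,
    Category.assoc, eqToHom_trans_assoc] at we
  rw [eqToHom_comp_iff, comp_eqToHom_iff] at we
  rw [we]
  simp

theorem star_eq {T : TwoMonad K} (X Y : T.Alg) {f g : X.A ⟶ Y.A} (α : f ⟶ g) :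
    ((X.a ≫ T.η X.A) ◁ (T.map₂ α ▷ Y.a)) ≫ eqToHom (comp_eq T X Y g) =
      eqToHom (comp_eq T X Y f) ≫ (X.a ◁ α) := by
  have hη := T.η_nat₂ α
  rw [comp_eqToHom_iff] at hη
  have hsr : (α ▷ T.η Y.A) ▷ Y.a =
      eqToHom (Category.assoc f (T.η Y.A) Y.a) ≫ (α ▷ (T.η Y.A ≫ Y.a)) ≫
        eqToHom (Category.assoc g (T.η Y.A) Y.a).symm := by
    rw [sR]; simp
  rw [sL, sA, hη]
  simp only [Bicategory.comp_whiskerRight, eqToHom_whiskerRight,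
    Bicategory.whiskerLeft_comp, Bicategory.whiskerLeft_eqToHom,
    Category.assoc, eqToHom_trans, eqToHom_trans_assoc]
  rw [hsr, wR_congr α Y.unit, sRid]
  simp only [Bicategory.whiskerLeft_comp, Bicategory.whiskerLeft_eqToHom,
    Category.assoc, eqToHom_trans, eqToHom_trans_assoc]
  simp



/-- If `T` is a lax-idempotent 2-monad on a 2-category `K`, then for any
lax `T`-morphisms `(f, f̄), (g, ḡ) : (A,a) → (B,b)` and any 2-cell `α : f ⟶ g` of `K`,
the 2-cell `α` is automatically a `T`-transformation, i.e.
`ḡ ∘ (b · Tα) = (α · a) ∘ f̄`. -/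
theorem laxIdempotent_two_cells_are_transformations
    (T : TwoMonad K) (hT : TwoMonad.LaxIdempotent T) (X Y : T.Alg)
    (f g : X.A ⟶ Y.A) (fc : TwoMonad.LaxCell X Y f) (gc : TwoMonad.LaxCell X Y g)
    (α : f ⟶ g) :
    (T.map₂ α ▷ Y.a) ≫ gc.cell = fc.cell ≫ (X.a ◁ α) := by
  obtain ⟨adj, hε⟩ := hT X
  rw [cell_eq_canonical fc adj hε, cell_eq_canonical gc adj hε]
  have we := whisker_exchange adj.unit (T.map₂ α ▷ Y.a)
  rw [sLid] at we
  simp only [Category.assoc] at we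
  have we2 := reassoc_of% we
  have we3 := we2 (eqToHom (comp_eq T X Y g))
  rw [eqToHom_comp_iff] at we3
  simp only [Category.assoc]
  rw [we3, star_eq X Y α]
end

section
/- Let F : C → Set be a functor from a small category C, and let J : ob(C) → C be the inclusion of the discrete category on the objects of C. Then the category of elements el(F) is a disjoint union of categories each having an initial object if and only if there exists a functor G : ob(C) → Set and a natural isomorphism Lan_J G ≅ F. -/
open CategoryTheory

universe u

/-- The explicit pointwise formula for the left Kan extension of a functor
`G : ob C → Set` along the inclusion `J : ob C → C` of the discrete category of
objects: `(Lan_J G)(c) = Σ_{c' ∈ C, x ∈ G c'} C(c', c)`. -/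
def lanExplicit {C : Type u} [SmallCategory C] (G : C → Type u) : C ⥤ Type u where
  obj c := Σ c' : C, G c' × (c' ⟶ c)
  map f := TypeCat.ofHom fun p => ⟨p.1, p.2.1, p.2.2 ≫ f⟩
  map_id c := by ext ⟨a, x, g⟩ : 3; simp
  map_comp f g := by ext ⟨a, x, h⟩ : 3; simp

/-!
Choosing one initial object in each connected component of `el(F)` is the same as choosing a
retraction `r` of the objects of `el(F)` that is constant along morphisms and such that `r X`
has exactly one morphism to `X`. Given such an `r`, take `G c` to be the elements of `F c` fixed
by `r`; every element `y ∈ F c` is then reached from exactly one `(c', x ∈ G c')` by exactly one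
`f : c' ⟶ c`, which says that `(c', x, f) ↦ F f x` is a bijection `Lan_J G ≅ F`. Conversely
`el(Lan_J G)` has the selection `(c, (c', x, f)) ↦ (c', (c', x, 𝟙))`, and selections transport
along the equivalence `el(Lan_J G) ≌ el(F)`.
-/

namespace CategoryTheory

def ComponentsHaveInitial (J : Type*) [Category J] : Prop :=
  ∀ X : J, ∃ Y : J, Zigzag Y X ∧ ∀ Z : J, Zigzag Y Z → ∃! _ : (Y ⟶ Z), True

structure IsInitialSelector {J : Type*} [Category J] (r : J → J) : Prop where
  eq_of_hom : ∀ {X Y : J}, (X ⟶ Y) → r X = r Y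
  unique_hom : ∀ X : J, Nonempty (Unique (r X ⟶ X))

namespace IsInitialSelector

variable {J K : Type*} [Category J] [Category K] {r : J → J}

theorem eq_of_zigzag (hr : IsInitialSelector r) {X Y : J} (h : Zigzag X Y) : r X = r Y := by
  induction h with
  | refl => rfl
  | tail _ hzag ih =>
    rcases hzag with ⟨⟨f⟩⟩ | ⟨⟨f⟩⟩
    exacts [ih.trans (hr.eq_of_hom f), ih.trans (hr.eq_of_hom f).symm]

theorem idem (hr : IsInitialSelector r) (X : J) : r (r X) = r X :=
  hr.eq_of_hom (hr.unique_hom X).some.default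

theorem subsingleton_hom (hr : IsInitialSelector r) {X Y : J} (h : r Y = X) :
    Subsingleton (X ⟶ Y) := by
  subst h
  exact (hr.unique_hom Y).elim fun _ => inferInstance

theorem transfer (hr : IsInitialSelector r) (e : J ≌ K) :
    IsInitialSelector fun X => e.functor.obj (r (e.inverse.obj X)) where
  eq_of_hom f := by rw [hr.eq_of_hom (e.inverse.map f)]
  unique_hom X := (hr.unique_hom _).map (Equiv.uniqueCongr (e.toAdjunction.homEquiv _ _)).symm

end IsInitialSelector

theorem componentsHaveInitial_iff_exists_isInitialSelector {J : Type*} [Category J] :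
    ComponentsHaveInitial J ↔ ∃ r : J → J, IsInitialSelector r := by
  constructor
  · intro h
    choose Y hYX hY using h
    let S := Zigzag.setoid J
    -- going through the component of `X` makes the choice constant along zigzags
    refine ⟨fun X => Y (_root_.Quotient.mk S X).out, ⟨fun f => ?_, fun X => ?_⟩⟩
    · rw [_root_.Quotient.sound (Zigzag.of_hom f)]
    · have hX : Zigzag (_root_.Quotient.mk S X).out X := _root_.Quotient.mk_out X
      exact (unique_iff_existsUnique _).2 (hY _ X ((hYX _).trans hX))
  · rintro ⟨r, hr⟩ X
    refine ⟨r X, Zigzag.of_hom (hr.unique_hom X).some.default, fun Z hZ => ?_⟩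
    rw [← hr.idem X, hr.eq_of_zigzag hZ]
    exact (unique_iff_existsUnique _).1 (hr.unique_hom Z)

def Functor.elementsEquivOfIso {C : Type*} [Category C] {F F' : C ⥤ Type u} (e : F ≅ F') :
    F.Elements ≌ F'.Elements :=
  Cat.equivOfIso (Functor.elementsFunctor.mapIso e)

end CategoryTheory

section LanExplicit

variable {C : Type u} [SmallCategory C]

theorem isInitialSelector_lanExplicit (G : C → Type u) :
    IsInitialSelector fun X : (lanExplicit G).Elements =>
      (lanExplicit G).elementsMk X.2.1 ⟨X.2.1, X.2.2.1, 𝟙 _⟩ where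
  eq_of_hom u := by
    rw [← u.2]
    rfl
  unique_hom := by
    rintro ⟨c, a, x, f⟩
    have hom_iff (h : a ⟶ c) :
        (⟨a, x, 𝟙 a ≫ h⟩ : (lanExplicit G).obj c) = ⟨a, x, f⟩ ↔ h = f := by simp
    exact ⟨{ default := ⟨f, (hom_iff f).2 rfl⟩
             uniq g := Subtype.ext ((hom_iff _).1 g.2) }⟩

def lanExplicitDesc {F : C ⥤ Type u} {G : C → Type u} (ι : ∀ c, G c → F.obj c) :
    lanExplicit G ⟶ F where
  app c := TypeCat.ofHom fun p => F.map p.2.2 (ι p.1 p.2.1)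
  naturality c d f := by
    ext ⟨a, x, g⟩ : 3
    simp [lanExplicit]

def selectedElements {F : C ⥤ Type u} (r : F.Elements → F.Elements) (c : C) : Type u :=
  {x : F.obj c // r (F.elementsMk c x) = F.elementsMk c x}

theorem bijective_lanExplicitDesc_app {F : C ⥤ Type u} {r : F.Elements → F.Elements}
    (hr : IsInitialSelector r) (c : C) :
    Function.Bijective
      ((lanExplicitDesc (G := selectedElements r) fun _ => Subtype.val).app c) := by
  constructor
  · rintro ⟨a, ⟨x, hx⟩, f⟩ ⟨b, ⟨y, hy⟩, g⟩ hfg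
    change F.map f x = F.map g y at hfg
    let Z := F.elementsMk c (F.map f x)
    let f' : F.elementsMk a x ⟶ Z := ⟨f, rfl⟩
    let g' : F.elementsMk b y ⟶ Z := ⟨g, hfg.symm⟩
    have hxZ : r Z = F.elementsMk a x := (hr.eq_of_hom f').symm.trans hx
    have hyZ : r Z = F.elementsMk b y := (hr.eq_of_hom g').symm.trans hy
    obtain ⟨rfl, hxy⟩ := Sigma.mk.inj_iff.1 (hxZ.symm.trans hyZ)
    obtain rfl := eq_of_heq hxy
    have := hr.subsingleton_hom hxZ
    obtain rfl : f = g := congrArg Subtype.val (Subsingleton.elim f' g')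
    rfl
  · intro y
    let X := F.elementsMk c y
    let u : r X ⟶ X := (hr.unique_hom X).some.default
    exact ⟨⟨(r X).1, ⟨(r X).2, hr.idem X⟩, u.1⟩, u.2⟩

noncomputable def lanExplicitIsoOfIsInitialSelector {F : C ⥤ Type u}
    {r : F.Elements → F.Elements} (hr : IsInitialSelector r) :
    lanExplicit (selectedElements r) ≅ F :=
  NatIso.ofComponents (fun c => (Equiv.ofBijective _ (bijective_lanExplicitDesc_app hr c)).toIso)
    fun f => (lanExplicitDesc (G := selectedElements r) fun _ => Subtype.val).naturality f

end LanExplicit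

/-- For a functor `F : C → Set`, the category of elements `el(F)` is a
disjoint union of categories each having an initial object (i.e. every connected
component of `el(F)` contains an object which is initial in that component) if and
only if `F` is naturally isomorphic to the left Kan extension `Lan_J G` of some
functor `G : ob C → Set` along the inclusion of the discrete category of objects. -/
theorem elements_components_initial_iff_lan_from_discrete
    {C : Type u} [SmallCategory C] (F : C ⥤ Type u) :
    (∀ X : F.Elements, ∃ Y : F.Elements, Zigzag Y X ∧
      ∀ Z : F.Elements, Zigzag Y Z → ∃! _ : (Y ⟶ Z), True) ↔
    ∃ G : C → Type u, Nonempty (lanExplicit G ≅ F) := by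
  change ComponentsHaveInitial F.Elements ↔ _
  rw [componentsHaveInitial_iff_exists_isInitialSelector]
  constructor
  · rintro ⟨r, hr⟩
    exact ⟨selectedElements r, ⟨lanExplicitIsoOfIsInitialSelector hr⟩⟩
  · rintro ⟨G, ⟨e⟩⟩
    exact ⟨_, (isInitialSelector_lanExplicit G).transfer (Functor.elementsEquivOfIso e)⟩
end
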